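/- Soundness and strong completeness of SLEA + (p → ∘(∘¬p → p)) over symmetric frames: for every set Γ of LEA-formulas and every LEA-formula φ, φ is derivable from Γ in the system SLEA extended with the axiom ∘B: p → ∘(∘¬p → p) if and only if φ is a semantic consequence of Γ over the class of models whose relation is symmetric. -/
import Mathlib


/-- The language LEA of essence and accident. -/
inductive LEAForm : Type
  | atom : ℕ → LEAForm
  | neg : LEAForm → LEAForm
  | and : LEAForm → LEAForm → LEAForm
  | ess : LEAForm → LEAForm

/-- A Kripke model (the frame is (W, R)). -/
structure Model (W : Type) where
  R : W → W → Prop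
  V : ℕ → W → Prop

/-- Satisfaction for LEA. -/
def satLEA {W : Type} (M : Model W) : W → LEAForm → Prop
  | w, .atom p => M.V p w
  | w, .neg φ => ¬ satLEA M w φ
  | w, .and φ ψ => satLEA M w φ ∧ satLEA M w ψ
  | w, .ess φ => satLEA M w φ → ∀ v, M.R w v → satLEA M v φ

/-- Implication, defined as usual. -/
def impF (φ ψ : LEAForm) : LEAForm := .neg (.and φ (.neg ψ))
/-- ⊤, defined as usual. -/
def topL : LEAForm := .neg (.and (.atom 0) (.neg (.atom 0)))

/-- Uniform substitution of formulas for propositional variables. -/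
def substL (σ : ℕ → LEAForm) : LEAForm → LEAForm
  | .atom p => σ p
  | .neg φ => .neg (substL σ φ)
  | .and φ ψ => .and (substL σ φ) (substL σ ψ)
  | .ess φ => .ess (substL σ φ)

/-- φ is a propositional tautology: it evaluates to true under every boolean
valuation of LEA-formulas that respects negation and conjunction. -/
def isTaut (φ : LEAForm) : Prop :=
  ∀ v : LEAForm → Bool,
    (∀ ψ, v (.neg ψ) = !(v ψ)) →
    (∀ ψ χ, v (.and ψ χ) = (v ψ && v χ)) →
    v φ = true

/-- Theorems of the system SLEA (optionally extended by the axioms in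
`extra`): all propositional tautologies, the axioms ∘⊤, ¬p → ∘p and
(∘p ∧ ∘q) → ∘(p∧q), closed under uniform substitution, modus ponens, and
the rule R: from φ → ψ infer (∘φ ∧ φ) → ∘ψ. -/
inductive SLEAthm (extra : Set LEAForm) : LEAForm → Prop
  | taut {φ} : isTaut φ → SLEAthm extra φ
  | axTop : SLEAthm extra (.ess topL)
  | axEqui : SLEAthm extra (impF (.neg (.atom 0)) (.ess (.atom 0)))
  | axCon : SLEAthm extra
      (impF (.and (.ess (.atom 0)) (.ess (.atom 1)))
        (.ess (.and (.atom 0) (.atom 1))))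
  | axExtra {φ} : φ ∈ extra → SLEAthm extra φ
  | sub {φ} (σ : ℕ → LEAForm) : SLEAthm extra φ → SLEAthm extra (substL σ φ)
  | mp {φ ψ} : SLEAthm extra (impF φ ψ) → SLEAthm extra φ → SLEAthm extra ψ
  | ruleR {φ ψ} : SLEAthm extra (impF φ ψ) →
      SLEAthm extra (impF (.and (.ess φ) φ) (.ess ψ))

/-- Derivability of φ from a set Γ of premises in SLEA (+ `extra`). -/
inductive SLEAderiv (extra : Set LEAForm) (Γ : Set LEAForm) : LEAForm → Prop
  | thm {φ} : SLEAthm extra φ → SLEAderiv extra Γ φ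
  | hyp {φ} : φ ∈ Γ → SLEAderiv extra Γ φ
  | mp {φ ψ} : SLEAderiv extra Γ (impF φ ψ) → SLEAderiv extra Γ φ →
      SLEAderiv extra Γ ψ
/-- The axiom ∘B: p → ∘(∘¬p → p). -/
def axB : LEAForm := impF (.atom 0) (.ess (impF (.ess (.neg (.atom 0))) (.atom 0)))

section Aux

open LEAForm

variable {E : Set LEAForm}

/-- Falsum. -/
def botF : LEAForm := .and (.atom 0) (.neg (.atom 0))

/-! ### Tautology instances -/

lemma tK (a b : LEAForm) : SLEAthm E (impF a (impF b a)) := by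
  apply SLEAthm.taut; intro v hn ha
  simp only [impF, hn, ha]
  cases hva : v a <;> cases hvb : v b <;> simp [hva, hvb]

lemma tS (a b c : LEAForm) :
    SLEAthm E (impF (impF a (impF b c)) (impF (impF a b) (impF a c))) := by
  apply SLEAthm.taut; intro v hn ha
  simp only [impF, hn, ha]
  cases hva : v a <;> cases hvb : v b <;> cases hvc : v c <;> simp [hva, hvb, hvc]

lemma tId (a : LEAForm) : SLEAthm E (impF a a) := by
  apply SLEAthm.taut; intro v hn ha
  simp only [impF, hn, ha]
  cases hva : v a <;> simp [hva]

lemma tAndI (a b : LEAForm) : SLEAthm E (impF a (impF b (.and a b))) := by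
  apply SLEAthm.taut; intro v hn ha
  simp only [impF, hn, ha]
  cases hva : v a <;> cases hvb : v b <;> simp [hva, hvb]

lemma tAndL (a b : LEAForm) : SLEAthm E (impF (.and a b) a) := by
  apply SLEAthm.taut; intro v hn ha
  simp only [impF, hn, ha]
  cases hva : v a <;> cases hvb : v b <;> simp [hva, hvb]

lemma tAndR (a b : LEAForm) : SLEAthm E (impF (.and a b) b) := by
  apply SLEAthm.taut; intro v hn ha
  simp only [impF, hn, ha]
  cases hva : v a <;> cases hvb : v b <;> simp [hva, hvb]

lemma tDNI (a : LEAForm) : SLEAthm E (impF a (.neg (.neg a))) := by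
  apply SLEAthm.taut; intro v hn ha
  simp only [impF, hn, ha]
  cases hva : v a <;> simp [hva]

lemma tBot (a : LEAForm) : SLEAthm E (impF a (impF (.neg a) botF)) := by
  apply SLEAthm.taut; intro v hn ha
  simp only [impF, botF, hn, ha]
  cases hva : v a <;> cases hv0 : v (.atom 0) <;> simp [hva, hv0]

lemma tPos (a : LEAForm) : SLEAthm E (impF (impF (.neg a) botF) a) := by
  apply SLEAthm.taut; intro v hn ha
  simp only [impF, botF, hn, ha]
  cases hva : v a <;> cases hv0 : v (.atom 0) <;> simp [hva, hv0]

lemma tNegI (a : LEAForm) : SLEAthm E (impF (impF a botF) (.neg a)) := by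
  apply SLEAthm.taut; intro v hn ha
  simp only [impF, botF, hn, ha]
  cases hva : v a <;> cases hv0 : v (.atom 0) <;> simp [hva, hv0]

lemma tImpOfNeg (a b : LEAForm) : SLEAthm E (impF (.neg a) (impF a b)) := by
  apply SLEAthm.taut; intro v hn ha
  simp only [impF, hn, ha]
  cases hva : v a <;> cases hvb : v b <;> simp [hva, hvb]

lemma tCurry (a b c : LEAForm) :
    SLEAthm E (impF (impF c (impF a b)) (impF (.and a c) b)) := by
  apply SLEAthm.taut; intro v hn ha
  simp only [impF, hn, ha]
  cases hva : v a <;> cases hvb : v b <;> cases hvc : v c <;> simp [hva, hvb, hvc]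

lemma tTop : SLEAthm E topL := by
  apply SLEAthm.taut; intro v hn ha
  simp only [topL, hn, ha]
  cases hv0 : v (.atom 0) <;> simp [hv0]

/-! ### Substitution instances of the modal axioms -/

lemma essEqui (a : LEAForm) : SLEAthm E (impF (.neg a) (.ess a)) := by
  have h := SLEAthm.sub (extra := E) (fun _ => a) SLEAthm.axEqui
  simpa [impF, substL] using h

lemma essCon (a b : LEAForm) :
    SLEAthm E (impF (.and (.ess a) (.ess b)) (.ess (.and a b))) := by
  have h := SLEAthm.sub (extra := E) (fun n => if n = 0 then a else b) SLEAthm.axCon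
  simpa [impF, substL] using h

lemma axB_inst (a : LEAForm) :
    SLEAthm ({axB} : Set LEAForm) (impF a (.ess (impF (.ess (.neg a)) a))) := by
  have h := SLEAthm.sub (extra := ({axB} : Set LEAForm)) (fun _ => a)
    (SLEAthm.axExtra rfl)
  simpa [axB, impF, substL] using h

/-! ### Basic facts about derivations -/

lemma deriv_mono {Γ Γ' : Set LEAForm} {φ : LEAForm} (h : SLEAderiv E Γ φ)
    (hsub : Γ ⊆ Γ') : SLEAderiv E Γ' φ := by
  induction h with
  | thm h => exact .thm h
  | hyp h => exact .hyp (hsub h)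
  | mp _ _ ih1 ih2 => exact .mp ih1 ih2

lemma deriv_of_thm_imp {Γ : Set LEAForm} {a b : LEAForm}
    (h : SLEAthm E (impF a b)) (ha : SLEAderiv E Γ a) : SLEAderiv E Γ b :=
  .mp (.thm h) ha

lemma deduction {Γ : Set LEAForm} {ψ φ : LEAForm}
    (h : SLEAderiv E (insert ψ Γ) φ) : SLEAderiv E Γ (impF ψ φ) := by
  induction h with
  | thm h => exact .mp (.thm (tK _ _)) (.thm h)
  | hyp h =>
    rcases Set.mem_insert_iff.1 h with h | h
    · subst h; exact .thm (tId _)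
    · exact .mp (.thm (tK _ _)) (.hyp h)
  | mp _ _ ih1 ih2 => exact .mp (.mp (.thm (tS _ _ _)) ih1) ih2

lemma thm_of_deriv_empty {φ : LEAForm} (h : SLEAderiv E ∅ φ) : SLEAthm E φ := by
  induction h with
  | thm h => exact h
  | hyp h => exact absurd h (Set.notMem_empty _)
  | mp _ _ ih1 ih2 => exact .mp ih1 ih2

lemma deriv_finite {Γ : Set LEAForm} {φ : LEAForm} (h : SLEAderiv E Γ φ) :
    ∃ l : List LEAForm, (∀ x ∈ l, x ∈ Γ) ∧ SLEAderiv E {x | x ∈ l} φ := by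
  induction h with
  | thm h => exact ⟨[], by simp, .thm h⟩
  | @hyp ψ h => exact ⟨[ψ], by simpa using h, .hyp (by simp)⟩
  | mp _ _ ih1 ih2 =>
    obtain ⟨l1, hl1, d1⟩ := ih1
    obtain ⟨l2, hl2, d2⟩ := ih2
    refine ⟨l1 ++ l2, ?_, ?_⟩
    · intro x hx
      rcases List.mem_append.1 hx with h | h
      exacts [hl1 x h, hl2 x h]
    · refine .mp (deriv_mono d1 ?_) (deriv_mono d2 ?_) <;>
        · intro x hx; simp_all

/-- Conjunction of a list of formulas. -/
def conjL : List LEAForm → LEAForm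
  | [] => topL
  | a :: l => .and a (conjL l)

lemma deriv_list_thm {φ : LEAForm} :
    ∀ l : List LEAForm, SLEAderiv E {x | x ∈ l} φ → SLEAthm E (impF (conjL l) φ)
  | [], h => by
    have : SLEAthm E φ := thm_of_deriv_empty (by simpa using h)
    exact .mp (tK φ topL) this
  | a :: l, h => by
    have h' : SLEAderiv E (insert a {x | x ∈ l}) φ := by
      apply deriv_mono h; intro x hx; simpa using hx
    have h2 : SLEAthm E (impF (conjL l) (impF a φ)) :=
      deriv_list_thm l (deduction h')
    exact .mp (tCurry a φ (conjL l)) h2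

/-! ### Consistent and maximal consistent sets -/

/-- Consistency. -/
def ConsS (E Γ : Set LEAForm) : Prop := ¬ SLEAderiv E Γ botF

/-- Maximal consistent sets. -/
def MCSS (E s : Set LEAForm) : Prop :=
  ConsS E s ∧ ∀ φ : LEAForm, φ ∈ s ∨ .neg φ ∈ s

lemma mcs_closed {s : Set LEAForm} (hs : MCSS E s) {φ : LEAForm}
    (h : SLEAderiv E s φ) : φ ∈ s := by
  rcases hs.2 φ with hmem | hneg
  · exact hmem
  · exact absurd (.mp (.mp (.thm (tBot φ)) h) (.hyp hneg)) hs.1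

lemma mcs_thm {s : Set LEAForm} (hs : MCSS E s) {φ : LEAForm}
    (h : SLEAthm E φ) : φ ∈ s := mcs_closed hs (.thm h)

lemma mcs_mp {s : Set LEAForm} (hs : MCSS E s) {a b : LEAForm}
    (h : impF a b ∈ s) (ha : a ∈ s) : b ∈ s :=
  mcs_closed hs (.mp (.hyp h) (.hyp ha))

lemma mcs_thm_mp {s : Set LEAForm} (hs : MCSS E s) {a b : LEAForm}
    (h : SLEAthm E (impF a b)) (ha : a ∈ s) : b ∈ s :=
  mcs_closed hs (.mp (.thm h) (.hyp ha))

lemma mcs_neg_iff {s : Set LEAForm} (hs : MCSS E s) {φ : LEAForm} :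
    LEAForm.neg φ ∈ s ↔ φ ∉ s := by
  constructor
  · intro hn hp
    exact absurd (.mp (.mp (.thm (tBot φ)) (.hyp hp)) (.hyp hn)) hs.1
  · intro hp
    rcases hs.2 φ with h | h
    · exact absurd h hp
    · exact h

lemma mcs_and_iff {s : Set LEAForm} (hs : MCSS E s) {a b : LEAForm} :
    LEAForm.and a b ∈ s ↔ a ∈ s ∧ b ∈ s := by
  constructor
  · intro h
    exact ⟨mcs_thm_mp hs (tAndL a b) h, mcs_thm_mp hs (tAndR a b) h⟩
  · rintro ⟨ha, hb⟩
    exact mcs_closed hs (.mp (.mp (.thm (tAndI a b)) (.hyp ha)) (.hyp hb))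

lemma mcs_imp_of_mem {s : Set LEAForm} (hs : MCSS E s) {a b : LEAForm}
    (h : a ∉ s ∨ b ∈ s) : impF a b ∈ s := by
  rcases h with h | h
  · exact mcs_thm_mp hs (tImpOfNeg a b) ((mcs_neg_iff hs).2 h)
  · exact mcs_thm_mp hs (tK b a) h

/-! ### Lindenbaum -/

lemma chain_cover {c : Set (Set LEAForm)} (hchain : IsChain (· ⊆ ·) c)
    {Δ0 : Set LEAForm} (hΔ0 : Δ0 ∈ c) :
    ∀ l : List LEAForm, (∀ x ∈ l, x ∈ ⋃₀ c) → ∃ Δ ∈ c, ∀ x ∈ l, x ∈ Δ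
  | [], _ => ⟨Δ0, hΔ0, by simp⟩
  | a :: l, hl => by
    obtain ⟨Δ, hΔc, hlΔ⟩ := chain_cover hchain hΔ0 l (fun x hx => hl x (by simp [hx]))
    obtain ⟨Δa, hΔac, haΔa⟩ := hl a (by simp)
    rcases hchain.total hΔc hΔac with hsub | hsub
    · refine ⟨Δa, hΔac, ?_⟩
      intro x hx
      rcases List.mem_cons.1 hx with h | h
      exacts [h ▸ haΔa, hsub (hlΔ x h)]
    · refine ⟨Δ, hΔc, ?_⟩
      intro x hx
      rcases List.mem_cons.1 hx with h | h
      exacts [h ▸ hsub haΔa, hlΔ x h]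

lemma lindenbaum {Γ : Set LEAForm} (h : ConsS E Γ) :
    ∃ s, Γ ⊆ s ∧ MCSS E s := by
  have H : ∀ c ⊆ {Δ | ConsS E Δ}, IsChain (· ⊆ ·) c → c.Nonempty →
      ∃ ub ∈ {Δ | ConsS E Δ}, ∀ s ∈ c, s ⊆ ub := by
    intro c hcsub hchain hcne
    refine ⟨⋃₀ c, ?_, fun s hs => Set.subset_sUnion_of_mem hs⟩
    intro hder
    obtain ⟨l, hl, hd⟩ := deriv_finite hder
    obtain ⟨Δ0, hΔ0⟩ := hcne
    obtain ⟨Δ, hΔc, hlΔ⟩ := chain_cover hchain hΔ0 l hl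
    exact (hcsub hΔc) (deriv_mono hd (by intro x hx; exact hlΔ x hx))
  obtain ⟨m, hΓm, hm⟩ := zorn_subset_nonempty {Δ | ConsS E Δ} H Γ h
  refine ⟨m, hΓm, hm.1, ?_⟩
  have key : ∀ χ, ConsS E (insert χ m) → χ ∈ m := by
    intro χ hc
    exact (hm.2 hc (Set.subset_insert _ _)) (Set.mem_insert _ _)
  intro φ
  by_contra hcon
  push_neg at hcon
  obtain ⟨h1, h2⟩ := hcon
  have c1 : ¬ ConsS E (insert φ m) := fun hc => h1 (key _ hc)
  have c2 : ¬ ConsS E (insert (LEAForm.neg φ) m) := fun hc => h2 (key _ hc)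
  simp only [ConsS, not_not] at c1 c2
  have d1 : SLEAderiv E m (impF φ botF) := deduction c1
  have d2 : SLEAderiv E m (impF (LEAForm.neg φ) botF) := deduction c2
  have dphi : SLEAderiv E m φ := .mp (.thm (tPos φ)) d2
  exact hm.1 (.mp d1 dphi)

/-! ### The ess-membership lemma -/

lemma mcs_ess_conj {s : Set LEAForm} (hs : MCSS E s) :
    ∀ l : List LEAForm, (∀ ψ ∈ l, LEAForm.ess ψ ∈ s ∧ ψ ∈ s) →
      LEAForm.ess (conjL l) ∈ s ∧ conjL l ∈ s
  | [], _ => ⟨mcs_thm hs .axTop, mcs_thm hs tTop⟩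
  | a :: l, h => by
    obtain ⟨he, hm⟩ := mcs_ess_conj hs l (fun ψ hψ => h ψ (by simp [hψ]))
    obtain ⟨hea, hma⟩ := h a (by simp)
    constructor
    · have hand : LEAForm.and (.ess a) (.ess (conjL l)) ∈ s :=
        (mcs_and_iff hs).2 ⟨hea, he⟩
      exact mcs_thm_mp hs (essCon a (conjL l)) hand
    · exact (mcs_and_iff hs).2 ⟨hma, hm⟩

lemma mcs_ess_of_list {s : Set LEAForm} (hs : MCSS E s) {φ : LEAForm}
    {l : List LEAForm} (h : ∀ ψ ∈ l, LEAForm.ess ψ ∈ s ∧ ψ ∈ s)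
    (hthm : SLEAthm E (impF (conjL l) φ)) : LEAForm.ess φ ∈ s := by
  obtain ⟨he, hm⟩ := mcs_ess_conj hs l h
  have hr : SLEAthm E (impF (.and (.ess (conjL l)) (conjL l)) (.ess φ)) :=
    .ruleR hthm
  have hand : LEAForm.and (.ess (conjL l)) (conjL l) ∈ s :=
    (mcs_and_iff hs).2 ⟨he, hm⟩
  exact mcs_thm_mp hs hr hand

lemma mcs_ess_exists {s : Set LEAForm} (hs : MCSS E s) {φ : LEAForm}
    (h : LEAForm.ess φ ∉ s) :
    ∃ t, ({ψ | LEAForm.ess ψ ∈ s ∧ ψ ∈ s} : Set LEAForm) ⊆ t ∧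
      LEAForm.neg φ ∈ t ∧ MCSS E t := by
  set X : Set LEAForm := {ψ | LEAForm.ess ψ ∈ s ∧ ψ ∈ s}
  have hcons : ConsS E (insert (LEAForm.neg φ) X) := by
    intro hder
    have d1 : SLEAderiv E X (impF (LEAForm.neg φ) botF) := deduction hder
    have dphi : SLEAderiv E X φ := .mp (.thm (tPos φ)) d1
    obtain ⟨l, hl, hd⟩ := deriv_finite dphi
    have hthm := deriv_list_thm l hd
    exact h (mcs_ess_of_list hs (fun ψ hψ => hl ψ hψ) hthm)
  obtain ⟨t, hsub, ht⟩ := lindenbaum hcons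
  exact ⟨t, fun ψ hψ => hsub (Set.mem_insert_of_mem _ hψ), hsub (Set.mem_insert _ _), ht⟩

end Aux
section Semantics

open LEAForm

lemma sat_impF {W : Type} (M : Model W) (s : W) (a b : LEAForm) :
    satLEA M s (impF a b) ↔ (satLEA M s a → satLEA M s b) := by
  simp only [impF, satLEA]
  tauto

lemma sat_subst {W : Type} (M : Model W) (σ : ℕ → LEAForm) :
    ∀ (φ : LEAForm) (s : W),
      satLEA M s (substL σ φ) ↔
        satLEA ⟨M.R, fun p w => satLEA M w (σ p)⟩ s φ
  | .atom p, s => by simp [substL, satLEA]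
  | .neg φ, s => by simp [substL, satLEA, sat_subst M σ φ s]
  | .and φ ψ, s => by simp [substL, satLEA, sat_subst M σ φ s, sat_subst M σ ψ s]
  | .ess φ, s => by
    simp only [substL, satLEA, sat_subst M σ φ]

lemma thm_sound {φ : LEAForm} (h : SLEAthm {axB} φ) :
    ∀ (W : Type) (M : Model W), (∀ a b, M.R a b → M.R b a) →
      ∀ s : W, satLEA M s φ := by
  induction h with
  | taut ht =>
    intro W M hsym s
    classical
    set v : LEAForm → Bool := fun ψ => if satLEA M s ψ then true else false with hv
    have hn : ∀ ψ, v (.neg ψ) = !(v ψ) := by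
      intro ψ; by_cases h : satLEA M s ψ <;> simp [hv, satLEA, h]
    have ha : ∀ ψ χ, v (.and ψ χ) = (v ψ && v χ) := by
      intro ψ χ
      by_cases h1 : satLEA M s ψ <;> by_cases h2 : satLEA M s χ <;>
        simp [hv, satLEA, h1, h2]
    have := ht v hn ha
    by_contra hns
    simp [hv, hns] at this
  | axTop =>
    intro W M hsym s
    intro _ v _
    simp only [topL, satLEA]
    tauto
  | axEqui =>
    intro W M hsym s
    rw [sat_impF]
    intro h hp
    exact absurd hp h
  | axCon =>
    intro W M hsym s
    rw [sat_impF]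
    intro h
    obtain ⟨h1, h2⟩ := h
    intro hp v hr
    exact ⟨h1 hp.1 v hr, h2 hp.2 v hr⟩
  | axExtra hφ =>
    intro W M hsym s
    rcases hφ with rfl
    rw [show (axB : LEAForm) =
      impF (.atom 0) (.ess (impF (.ess (.neg (.atom 0))) (.atom 0))) from rfl, sat_impF]
    intro hp _ t hst
    rw [sat_impF]
    intro hessneg
    by_contra hnt
    have hneg : satLEA M t (.neg (.atom 0)) := hnt
    have := hessneg hneg s (hsym _ _ hst)
    exact this hp
  | sub σ _ ih =>
    intro W M hsym s
    rw [sat_subst]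
    exact ih W ⟨M.R, fun p w => satLEA M w (σ p)⟩ hsym s
  | mp _ _ ih1 ih2 =>
    intro W M hsym s
    exact (sat_impF M s _ _).1 (ih1 W M hsym s) (ih2 W M hsym s)
  | ruleR _ ih =>
    intro W M hsym s
    rw [sat_impF]
    intro hand
    obtain ⟨hess, hφ⟩ : satLEA M s (.ess _) ∧ satLEA M s _ := hand
    intro _ v hr
    exact (sat_impF M v _ _).1 (ih W M hsym v) (hess hφ v hr)

/-! ### Canonical model -/

/-- Worlds of the canonical model: MCSs of SLEA + ∘B. -/
def canW : Type := {s : Set LEAForm // MCSS {axB} s}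

/-- The canonical model. -/
def canM : Model canW where
  R s t := ∀ ψ : LEAForm, .ess ψ ∈ s.1 → ψ ∈ s.1 → ψ ∈ t.1
  V p s := .atom p ∈ s.1

lemma canM_symm : ∀ a b : canW, canM.R a b → canM.R b a := by
  intro s t h ψ hess hpsi
  by_contra hns
  have hnψ : LEAForm.neg ψ ∈ s.1 := (mcs_neg_iff s.2).2 hns
  have h1 : LEAForm.ess (impF (.ess (.neg (.neg ψ))) (.neg ψ)) ∈ s.1 :=
    mcs_thm_mp s.2 (axB_inst (.neg ψ)) hnψ
  have h2 : impF (.ess (.neg (.neg ψ))) (.neg ψ) ∈ s.1 :=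
    mcs_imp_of_mem s.2 (Or.inr hnψ)
  have h3 : impF (.ess (.neg (.neg ψ))) (.neg ψ) ∈ t.1 := h _ h1 h2
  have h4 : LEAForm.ess (.neg (.neg ψ)) ∈ t.1 :=
    mcs_thm_mp t.2 (SLEAthm.ruleR (tDNI ψ)) ((mcs_and_iff t.2).2 ⟨hess, hpsi⟩)
  have h5 : LEAForm.neg ψ ∈ t.1 := mcs_mp t.2 h3 h4
  exact ((mcs_neg_iff t.2).1 h5) hpsi

lemma truth : ∀ (φ : LEAForm) (s : canW), satLEA canM s φ ↔ φ ∈ s.1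
  | .atom p, s => Iff.rfl
  | .neg φ, s => by
    simp only [satLEA, truth φ s]
    exact (mcs_neg_iff s.2).symm
  | .and φ ψ, s => by
    simp only [satLEA, truth φ s, truth ψ s]
    exact (mcs_and_iff s.2).symm
  | .ess φ, s => by
    constructor
    · intro hsat
      by_contra hne
      obtain ⟨t, hsub, hnφ, ht⟩ := mcs_ess_exists s.2 hne
      have hφs : φ ∈ s.1 := by
        by_contra hns
        exact hne (mcs_thm_mp s.2 (essEqui φ) ((mcs_neg_iff s.2).2 hns))
      have hR : canM.R s ⟨t, ht⟩ := fun χ h1 h2 => hsub ⟨h1, h2⟩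
      have hsatt := hsat ((truth φ s).2 hφs) ⟨t, ht⟩ hR
      exact (mcs_neg_iff ht).1 hnφ ((truth φ ⟨t, ht⟩).1 hsatt)
    · intro hmem hsφ v hRv
      exact (truth φ v).2 (hRv φ hmem ((truth φ s).1 hsφ))

end Semantics
/-- Soundness and strong completeness of SLEA + ∘B with respect to the class
of symmetric frames: Γ ⊢ φ in SLEA + ∘B iff φ is a semantic consequence of Γ
over all symmetric models. -/
theorem stmt19 (Γ : Set LEAForm) (φ : LEAForm) :
    SLEAderiv {axB} Γ φ ↔
      ∀ (W : Type) [Nonempty W] (M : Model W),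
        (∀ a b, M.R a b → M.R b a) →
        ∀ s : W, (∀ γ ∈ Γ, satLEA M s γ) → satLEA M s φ := by
  constructor
  · intro h
    induction h with
    | thm h =>
      intro W _ M hsym s _
      exact thm_sound h W M hsym s
    | hyp h =>
      intro W _ M hsym s hΓ
      exact hΓ _ h
    | mp _ _ ih1 ih2 =>
      intro W inst M hsym s hΓ
      exact (sat_impF M s _ _).1 (ih1 W M hsym s hΓ) (ih2 W M hsym s hΓ)
  · intro hval
    by_contra hnd
    have hcons : ConsS {axB} (insert (.neg φ) Γ) := by
      intro hder
      exact hnd (.mp (.thm (tPos φ)) (deduction hder))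
    obtain ⟨s, hsub, hs⟩ := lindenbaum hcons
    haveI : Nonempty canW := ⟨⟨s, hs⟩⟩
    have hsat : satLEA canM ⟨s, hs⟩ φ := by
      refine hval canW canM canM_symm ⟨s, hs⟩ ?_
      intro γ hγ
      exact (truth γ _).2 (hsub (Set.mem_insert_of_mem _ hγ))
    have hmem : φ ∈ s := (truth φ _).1 hsat
    exact (mcs_neg_iff hs).1 (hsub (Set.mem_insert _ _)) hmem
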